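/- Rounding centerpoints to the grid in the ℓ1-case: let G ⊆ ℝ^d be the uniform grid {k/2^b : k ∈ {0,...,2^b}}^d in [0,1]^d and let P ⊆ G. Suppose c ∈ [0,1]^d satisfies |H^1_{c,v} ∩ P| ≥ |P|/(d+1) for all unit vectors v, and let c' ∈ G be obtained from c by rounding each coordinate to a nearest grid coordinate. Then for every unit vector v and every z ∈ P, z ∈ H^1_{c,v} implies z ∈ H^1_{c',v}; in particular c' also satisfies |H^1_{c',v} ∩ P| ≥ |P|/(d+1) for all v. -/
import Mathlib


open scoped ENNReal

noncomputable def pnorm {d : ℕ} (p : ℝ≥0∞) [Fact (1 ≤ p)] (x : Fin d → ℝ) : ℝ :=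
  ‖(WithLp.equiv p (Fin d → ℝ)).symm x‖

def Hp {d : ℕ} (p : ℝ≥0∞) [Fact (1 ≤ p)] (x v : Fin d → ℝ) : Set (Fin d → ℝ) :=
  {z | ∀ ε : ℝ, 0 < ε → pnorm p (x - z) ≤ pnorm p (x - ε • v - z)}

def grid (d b : ℕ) : Set (Fin d → ℝ) :=
  {x | ∀ i, ∃ k : ℕ, k ≤ 2 ^ b ∧ x i = (k : ℝ) / 2 ^ b}

lemma pnorm_one_eq {d : ℕ} (x : Fin d → ℝ) : pnorm 1 x = ∑ i, |x i| := by
  unfold pnorm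
  rw [PiLp.norm_eq_sum (by norm_num : (0:ℝ) < (1:ℝ≥0∞).toReal)]
  simp [Real.norm_eq_abs]

/-- the directional derivative coefficient of `t ↦ |a - t|` -/
noncomputable def sgn (a t : ℝ) : ℝ :=
  if 0 < a then -t else if a < 0 then t else |t|

lemma sgn_of_pos {a : ℝ} (t : ℝ) (h : 0 < a) : sgn a t = -t := by
  unfold sgn; rw [if_pos h]

lemma sgn_of_neg {a : ℝ} (t : ℝ) (h : a < 0) : sgn a t = t := by
  unfold sgn; rw [if_neg (by linarith), if_pos h]

lemma sgn_of_zero {a : ℝ} (t : ℝ) (h : a = 0) : sgn a t = |t| := by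
  unfold sgn; rw [if_neg (by simp [h]), if_neg (by simp [h])]

lemma sgn_le_abs (a t : ℝ) : sgn a t ≤ |t| := by
  unfold sgn
  split_ifs
  · linarith [neg_abs_le t]
  · exact le_abs_self t
  · exact le_rfl

lemma abs_add_sgn_le (a t ε : ℝ) (hε : 0 < ε) : |a| + ε * sgn a t ≤ |a - ε * t| := by
  unfold sgn
  rcases lt_trichotomy a 0 with h | h | h
  · rw [if_neg (by linarith), if_pos h, abs_of_neg h]
    have : -a + ε * t = -(a - ε * t) := by ring
    linarith [neg_abs_le (a - ε * t), this]
  · subst h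
    simp [abs_mul, abs_of_pos hε]
  · rw [if_pos h, abs_of_pos h]
    have : a + ε * (-t) = a - ε * t := by ring
    rw [this]
    exact le_abs_self _

lemma abs_add_sgn_eq (a t ε : ℝ) (hε : 0 < ε) (h : a ≠ 0 → ε * |t| ≤ |a|) :
    |a - ε * t| = |a| + ε * sgn a t := by
  unfold sgn
  rcases lt_trichotomy a 0 with ha | ha | ha
  · have h' := h (ne_of_lt ha)
    rw [abs_of_neg ha] at h'
    have h1 : ε * t ≤ -a := le_trans (by nlinarith [le_abs_self t, mul_le_mul_of_nonneg_left (le_abs_self t) hε.le]) h'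
    rw [if_neg (by linarith), if_pos ha, abs_of_neg ha,
      abs_of_nonpos (by nlinarith [le_abs_self (-t), neg_abs_le t])]
    ring
  · subst ha
    simp [abs_mul, abs_of_pos hε]
  · have h' := h (ne_of_gt ha)
    rw [abs_of_pos ha] at h'
    rw [if_pos ha, abs_of_pos ha,
      abs_of_nonneg (by nlinarith [le_abs_self t])]
    ring

lemma mem_Hp_one_iff {d : ℕ} (x v z : Fin d → ℝ) :
    z ∈ Hp 1 x v ↔ 0 ≤ ∑ i, sgn (x i - z i) (v i) := by
  constructor
  · intro hz
    set g : Fin d → ℝ := fun i => if x i - z i = 0 then 1 else |x i - z i| / (|v i| + 1) with hg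
    set S : Finset ℝ := insert 1 (Finset.univ.image g) with hS
    have hSne : S.Nonempty := ⟨1, Finset.mem_insert_self _ _⟩
    set ε : ℝ := S.min' hSne with hε
    have hεpos : 0 < ε := by
      rw [hε, Finset.lt_min'_iff]
      intro y hy
      rw [hS, Finset.mem_insert] at hy
      rcases hy with rfl | hy
      · norm_num
      · obtain ⟨i, _, rfl⟩ := Finset.mem_image.mp hy
        rw [hg]
        dsimp only
        split_ifs with h
        · norm_num
        · exact div_pos (abs_pos.mpr h) (by positivity)
    have hkey : ∀ i, x i - z i ≠ 0 → ε * |v i| ≤ |x i - z i| := by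
      intro i hi
      have hle : ε ≤ g i :=
        Finset.min'_le _ _ (Finset.mem_insert_of_mem (Finset.mem_image_of_mem _ (Finset.mem_univ i)))
      rw [hg] at hle
      dsimp only at hle
      rw [if_neg hi] at hle
      have h1 : ε * (|v i| + 1) ≤ |x i - z i| := by
        rw [div_eq_mul_inv] at hle
        have : 0 < |v i| + 1 := by positivity
        calc ε * (|v i| + 1) ≤ |x i - z i| * (|v i| + 1)⁻¹ * (|v i| + 1) := by
              apply mul_le_mul_of_nonneg_right hle this.le
          _ = |x i - z i| := by field_simp
      nlinarith
    have h := hz ε hεpos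
    rw [pnorm_one_eq, pnorm_one_eq] at h
    have heq : ∑ i, |(x - ε • v - z) i| = ∑ i, (|x i - z i| + ε * sgn (x i - z i) (v i)) := by
      apply Finset.sum_congr rfl
      intro i _
      have : (x - ε • v - z) i = (x i - z i) - ε * v i := by
        simp [Pi.sub_apply, Pi.smul_apply, smul_eq_mul]; ring
      rw [this, abs_add_sgn_eq _ _ _ hεpos (hkey i)]
    have h2 : ∑ i, |(x - z) i| = ∑ i, |x i - z i| := by
      apply Finset.sum_congr rfl; intro i _; simp [Pi.sub_apply]
    rw [heq, h2, Finset.sum_add_distrib, ← Finset.mul_sum] at h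
    nlinarith
  · intro hS ε hεpos
    rw [pnorm_one_eq, pnorm_one_eq]
    have h2 : ∑ i, |(x - z) i| = ∑ i, |x i - z i| := by
      apply Finset.sum_congr rfl; intro i _; simp [Pi.sub_apply]
    calc ∑ i, |(x - z) i| = ∑ i, |x i - z i| := h2
      _ ≤ ∑ i, (|x i - z i| + ε * sgn (x i - z i) (v i)) := by
          rw [Finset.sum_add_distrib, ← Finset.mul_sum]
          nlinarith
      _ ≤ ∑ i, |(x - ε • v - z) i| := by
          apply Finset.sum_le_sum
          intro i _
          have : (x - ε • v - z) i = (x i - z i) - ε * v i := by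
            simp [Pi.sub_apply, Pi.smul_apply, smul_eq_mul]; ring
          rw [this]
          exact abs_add_sgn_le _ _ _ hεpos

theorem l1_centerpoint_rounding {d b : ℕ}
    (P : Finset (Fin d → ℝ)) (hP : ↑P ⊆ grid d b)
    (c : Fin d → ℝ) (hc0 : c ∈ Set.Icc (0 : Fin d → ℝ) 1)
    (hc : ∀ v : Fin d → ℝ, pnorm 2 v = 1 →
      (P.card : ℝ) / (d + 1) ≤ ((Hp 1 c v ∩ ↑P : Set (Fin d → ℝ)).ncard : ℝ))
    (c' : Fin d → ℝ) (hc'G : c' ∈ grid d b)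
    (hround : ∀ y ∈ grid d b, ∀ i, |c i - c' i| ≤ |c i - y i|) :
    (∀ v : Fin d → ℝ, pnorm 2 v = 1 → ∀ z ∈ P, z ∈ Hp 1 c v → z ∈ Hp 1 c' v) ∧
    (∀ v : Fin d → ℝ, pnorm 2 v = 1 →
      (P.card : ℝ) / (d + 1) ≤ ((Hp 1 c' v ∩ ↑P : Set (Fin d → ℝ)).ncard : ℝ)) := by
  -- sign compatibility from rounding
  have hsign : ∀ z ∈ P, ∀ i, (z i < c' i → z i < c i) ∧ (c' i < z i → c i < z i) := by
    intro z hz i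
    have hzg : z ∈ grid d b := hP hz
    have hr := hround z hzg i
    constructor
    · intro h
      by_contra hcon
      push_neg at hcon
      have h1 : |c i - c' i| = c' i - c i := by
        rw [abs_sub_comm, abs_of_pos (by linarith)]
      have h2 : |c i - z i| = z i - c i := by
        rw [abs_sub_comm, abs_of_nonneg (by linarith)]
      rw [h1, h2] at hr
      linarith
    · intro h
      by_contra hcon
      push_neg at hcon
      have h1 : |c i - c' i| = c i - c' i := abs_of_pos (by linarith)
      have h2 : |c i - z i| = c i - z i := abs_of_nonneg (by linarith)
      rw [h1, h2] at hr
      linarith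
  have key : ∀ v : Fin d → ℝ, ∀ z ∈ P, z ∈ Hp 1 c v → z ∈ Hp 1 c' v := by
    intro v z hz hzH
    rw [mem_Hp_one_iff] at hzH ⊢
    refine le_trans hzH (Finset.sum_le_sum ?_)
    intro i _
    obtain ⟨h1, h2⟩ := hsign z hz i
    rcases lt_trichotomy (c' i - z i) 0 with h | h | h
    · have hcc : c i < z i := h2 (by linarith)
      rw [sgn_of_neg _ h, sgn_of_neg _ (by linarith : c i - z i < 0)]
    · rw [sgn_of_zero _ h]
      exact sgn_le_abs _ _
    · have hcc : z i < c i := h1 (by linarith)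
      rw [sgn_of_pos _ h, sgn_of_pos _ (by linarith : 0 < c i - z i)]
  refine ⟨fun v _ => key v, ?_⟩
  intro v hv
  refine le_trans (hc v hv) ?_
  have hfin : (Hp 1 c' v ∩ ↑P : Set (Fin d → ℝ)).Finite :=
    Set.Finite.inter_of_right P.finite_toSet _
  have hsub : (Hp 1 c v ∩ ↑P : Set (Fin d → ℝ)) ⊆ Hp 1 c' v ∩ ↑P := by
    rintro z ⟨hz1, hz2⟩
    exact ⟨key v z hz2 hz1, hz2⟩
  exact_mod_cast Set.ncard_le_ncard hsub hfin
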